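/- The q-tangent numbers T_{2n+1}(q) of the (1,0,1,0) family satisfy the recursion T_{2n+1}(q) + sum_{k=1}^{n} C(2n+1,2k)_q · (-1)^k · q^(k(k-1)/2) · (prod_{i=1}^{k-1}(1+q^i)^2) · (1+q^k) · T_{2n+1-2k}(q) = (-1)^n q^(n(n-1)/2) prod_{i=1}^{n} (1+q^i)^2. -/

import Mathlib

noncomputable section
open Finset PowerSeries

abbrev Fq : Type := RatFunc ℚ

/-- The variable `q` as element of the field of rational functions `ℚ(q)`. -/
def qv : Fq := RatFunc.X

/-- The q-integer `[m]_q = 1 + q + ... + q^(m-1)`. -/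
def qInt (x : Fq) (m : ℕ) : Fq := ∑ i ∈ Finset.range m, x ^ i

/-- The q-factorial `[m]_q! = [1]_q [2]_q ⋯ [m]_q`. -/
def qFact (x : Fq) (m : ℕ) : Fq := ∏ i ∈ Finset.range m, qInt x (i + 1)

/-- `sin_q(z) = ∑ (-1)^n q^(n^2) z^(2n+1)/[2n+1]_q!`. -/
def qsin (x : Fq) : PowerSeries Fq :=
  PowerSeries.mk fun m =>
    if m % 2 = 1 then (-1 : Fq) ^ (m / 2) * x ^ ((m / 2) ^ 2) / qFact x m else 0

/-- `cos_q(z) = ∑ (-1)^n q^(n^2) z^(2n)/[2n]_q!`. -/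
def qcos (x : Fq) : PowerSeries Fq :=
  PowerSeries.mk fun m =>
    if m % 2 = 0 then (-1 : Fq) ^ (m / 2) * x ^ ((m / 2) ^ 2) / qFact x m else 0

/-- The q-tangent `tan_q(z) = sin_q(z)/cos_q(z)` as a formal power series. -/
def qtan : PowerSeries Fq := qsin qv * (qcos qv)⁻¹

/-- The q-tangent numbers: `T_m(q) = [m]_q! · [z^m] tan_q(z)`. -/
def T (m : ℕ) : Fq := qFact qv m * PowerSeries.coeff m qtan

/-- The Gaussian binomial coefficient `C(m,k)_q` in `ℚ(q)`. -/
def qBin (m k : ℕ) : Fq := qFact qv m / (qFact qv k * qFact qv (m - k))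

/-!
Let `Φ(z) = ∑ (-1)^k q^(k(k-1)) z^(2k)/[2k]_q!`. Multiplying `tan_q · cos_q = sin_q` by `Φ` and
reading off `[2n+1]_q!` times the coefficient of `z^(2n+1)` (a `q`-binomial convolution) gives
`∑_k C(2n+1,2k)_q a_k T_(2n+1-2k) = b_n`, where `a_k`, `b_n` are the normalized coefficients of
`Φ cos_q` and `Φ sin_q`. Both are sums `∑_k C(m,2k)_q q^(k(k-1)+(n-k)^2)` with `m ∈ {2n, 2n+1}`,
i.e. `q^(n^2)` times the even part of the `q`-binomial expansion of `∏_{i<m} (1 + q^i t)` at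
`t = q^(-n)`. At `-t` the factor `i = n` vanishes, so the even part is half of
`∏_{j=-n}^{m-n-1} (1 + q^j)`, which pairs `1 + q^(-j)` with `1 + q^j`.
-/

lemma sum_range_succ_eq_sum_range_even {M : Type*} [AddCommMonoid M] (f : ℕ → M)
    (hf : ∀ j, Odd j → f j = 0) (m : ℕ) :
    ∑ j ∈ range (m + 1), f j = ∑ k ∈ range (m / 2 + 1), f (2 * k) := by
  induction m with
  | zero => simp
  | succ m ih =>
    rw [sum_range_succ, ih]
    rcases Nat.even_or_odd (m + 1) with ⟨c, hc⟩ | hodd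
    · rw [show (m + 1) / 2 = m / 2 + 1 by omega, sum_range_succ _ (m / 2 + 1)]
      congr 2
      omega
    · obtain ⟨c, hc⟩ := hodd
      rw [hf _ ⟨c, hc⟩, add_zero, show (m + 1) / 2 = m / 2 by omega]

lemma prod_Icc_one_eq_prod_range {M : Type*} [CommMonoid M] (f : ℕ → M) (n : ℕ) :
    ∏ i ∈ Icc 1 n, f i = ∏ i ∈ range n, f (i + 1) := by
  rw [← Ico_add_one_right_eq_Icc, prod_Ico_eq_prod_range]
  simp [add_comm]

lemma choose_two_two_mul (k : ℕ) : (2 * k).choose 2 = k * (2 * k - 1) := by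
  rw [Nat.choose_two_right, mul_assoc, Nat.mul_div_cancel_left _ two_pos]

lemma sum_range_add_one_eq_choose_two (n : ℕ) : ∑ i ∈ range n, (i + 1) = (n + 1).choose 2 := by
  rw [Nat.choose_two_right, ← sum_range_id, sum_range_succ']
  simp

lemma sq_eq_choose_two_add_choose_two (n : ℕ) : n ^ 2 = n.choose 2 + (n + 1).choose 2 := by
  have h := Nat.div_two_mul_two_of_even (Nat.even_mul_pred_self n)
  rw [Nat.choose_succ_succ', Nat.choose_one_right, Nat.choose_two_right]
  cases n with
  | zero => rfl
  | succ n => simp only [Nat.add_sub_cancel] at h ⊢; nlinarith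

lemma PowerSeries.coeff_mul_eq_zero_of_odd {R : Type*} [Semiring R] {A B : PowerSeries R}
    (hA : ∀ j, Odd j → coeff j A = 0) (hB : ∀ j, Odd j → coeff j B = 0) {m : ℕ} (hm : Odd m) :
    coeff m (A * B) = 0 := by
  rw [coeff_mul]
  refine sum_eq_zero fun p hp => ?_
  rw [HasAntidiagonal.mem_antidiagonal] at hp
  rcases Nat.even_or_odd p.1 with h | h
  · rw [hB _ ((Nat.odd_add'.mp (hp ▸ hm)).mpr h), mul_zero]
  · rw [hA _ h, zero_mul]

lemma qFact_zero (x : Fq) : qFact x 0 = 1 := prod_range_zero _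

lemma qFact_succ (x : Fq) (m : ℕ) : qFact x (m + 1) = qFact x m * qInt x (m + 1) :=
  prod_range_succ _ m

lemma qInt_add (x : Fq) (a b : ℕ) : qInt x (a + b) = qInt x a + x ^ a * qInt x b := by
  simp only [qInt, sum_range_add, mul_sum, pow_add]

lemma qv_ne_zero : qv ≠ 0 := RatFunc.X_ne_zero

lemma qInt_qv_ne_zero {m : ℕ} (hm : m ≠ 0) : qInt qv m ≠ 0 := by
  have hpoly : qInt qv m = algebraMap (Polynomial ℚ) Fq (∑ i ∈ range m, Polynomial.X ^ i) := by
    simp [qInt, qv, RatFunc.algebraMap_X]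
  rw [hpoly]
  refine RatFunc.algebraMap_ne_zero fun h => hm ?_
  simpa [Polynomial.eval_finsetSum] using congrArg (Polynomial.eval 1) h

lemma qFact_qv_ne_zero (m : ℕ) : qFact qv m ≠ 0 :=
  prod_ne_zero_iff.2 fun i _ => qInt_qv_ne_zero i.succ_ne_zero

lemma qBin_zero (m : ℕ) : qBin m 0 = 1 := by
  simp [qBin, qFact_zero, qFact_qv_ne_zero]

lemma qBin_self (m : ℕ) : qBin m m = 1 := by
  simp [qBin, qFact_zero, qFact_qv_ne_zero]

lemma qBin_succ_succ {m j : ℕ} (hj : j < m) :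
    qBin (m + 1) (j + 1) = qBin m j + qv ^ (j + 1) * qBin m (j + 1) := by
  obtain ⟨d, rfl⟩ : ∃ d, m = j + 1 + d := ⟨m - (j + 1), by omega⟩
  have hsplit : qInt qv (j + 1 + d + 1) = qInt qv (j + 1) + qv ^ (j + 1) * qInt qv (d + 1) := by
    rw [add_assoc, qInt_add]
  simp only [qBin, show j + 1 + d + 1 - (j + 1) = d + 1 by omega,
    show j + 1 + d - j = d + 1 by omega, show j + 1 + d - (j + 1) = d by omega,
    qFact_succ _ (j + 1 + d), qFact_succ _ j, qFact_succ _ d, hsplit]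
  have := qFact_qv_ne_zero j
  have := qFact_qv_ne_zero d
  have := qInt_qv_ne_zero (Nat.succ_ne_zero j)
  have := qInt_qv_ne_zero (Nat.succ_ne_zero d)
  field_simp

theorem sum_qBin_mul_pow_eq_prod (m : ℕ) (t : Fq) :
    ∑ j ∈ range (m + 1), qBin m j * qv ^ j.choose 2 * t ^ j = ∏ i ∈ range m, (1 + qv ^ i * t) := by
  induction m generalizing t with
  | zero => simp [qBin_zero]
  | succ m ih =>
    set A : ℕ → Fq := fun j => qBin m j * qv ^ j.choose 2 * (qv * t) ^ j
    have hterm : ∀ j ∈ range m,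
        qBin (m + 1) (j + 1) * qv ^ (j + 1).choose 2 * t ^ (j + 1) = t * A j + A (j + 1) := by
      intro j hj
      simp only [A, qBin_succ_succ (mem_range.1 hj), Nat.choose_succ_succ', Nat.choose_one_right]
      ring
    have hlast : qBin (m + 1) (m + 1) * qv ^ (m + 1).choose 2 * t ^ (m + 1) = t * A m := by
      simp only [A, qBin_self, Nat.choose_succ_succ', Nat.choose_one_right]
      ring
    calc ∑ j ∈ range (m + 1 + 1), qBin (m + 1) j * qv ^ j.choose 2 * t ^ j
        = ∑ j ∈ range m, (t * A j + A (j + 1)) + t * A m + A 0 := by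
          rw [sum_range_succ', sum_range_succ, sum_congr rfl hterm, hlast]
          simp [A, qBin_zero]
      _ = (1 + t) * ∑ j ∈ range (m + 1), A j := by
          rw [sum_add_distrib, ← mul_sum]
          linear_combination -sum_range_succ' A m - t * sum_range_succ A m
      _ = ∏ i ∈ range (m + 1), (1 + qv ^ i * t) := by
          rw [ih, prod_range_succ']
          simp only [pow_succ, mul_assoc, pow_zero, mul_one, mul_comm]

lemma two_mul_sum_qBin_even_mul_pow (m : ℕ) (t : Fq) :
    2 * ∑ k ∈ range (m / 2 + 1), qBin m (2 * k) * qv ^ (2 * k).choose 2 * t ^ (2 * k)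
      = ∏ i ∈ range m, (1 + qv ^ i * t) + ∏ i ∈ range m, (1 + qv ^ i * -t) := by
  rw [← sum_qBin_mul_pow_eq_prod, ← sum_qBin_mul_pow_eq_prod, ← sum_add_distrib,
    sum_range_succ_eq_sum_range_even _ (fun j hj => ?_) m, mul_sum]
  · refine sum_congr rfl fun k _ => ?_
    rw [(even_two_mul k).neg_pow]
    ring
  · rw [hj.neg_pow]
    ring

lemma qv_pow_eq_mul_inv_pow {k n : ℕ} (hk : k ≤ n) :
    qv ^ (k * (k - 1) + (n - k) ^ 2)
      = qv ^ (n ^ 2) * (qv ^ (2 * k).choose 2 * ((qv ^ n)⁻¹) ^ (2 * k)) := by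
  have hexp : k * (k - 1) + (n - k) ^ 2 + n * (2 * k) = n ^ 2 + (2 * k).choose 2 := by
    obtain ⟨d, rfl⟩ : ∃ d, n = k + d := ⟨n - k, by omega⟩
    rw [choose_two_two_mul, Nat.add_sub_cancel_left]
    cases k with
    | zero => simp
    | succ k => simp only [Nat.add_sub_cancel, show 2 * (k + 1) - 1 = 2 * k + 1 by omega]; ring
  rw [inv_pow, ← pow_mul, ← mul_assoc, eq_mul_inv_iff_mul_eq₀ (pow_ne_zero _ qv_ne_zero),
    ← pow_add, ← pow_add, hexp]

lemma sum_qBin_even_mul_qv_pow {n r : ℕ} (hr : r < 2) (hn : n < 2 * n + r) :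
    ∑ k ∈ range (n + 1), qBin (2 * n + r) (2 * k) * qv ^ (k * (k - 1) + (n - k) ^ 2)
      = qv ^ (n ^ 2) * (2⁻¹ * ∏ i ∈ range (2 * n + r), (1 + qv ^ i * (qv ^ n)⁻¹)) := by
  have h := two_mul_sum_qBin_even_mul_pow (2 * n + r) (qv ^ n)⁻¹
  have hzero : ∏ i ∈ range (2 * n + r), (1 + qv ^ i * -(qv ^ n)⁻¹) = 0 :=
    prod_eq_zero (mem_range.2 hn) <| by
      rw [mul_neg, mul_inv_cancel₀ (pow_ne_zero _ qv_ne_zero), add_neg_cancel]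
  rw [show (2 * n + r) / 2 = n by omega, hzero, add_zero] at h
  rw [← h, inv_mul_cancel_left₀ two_ne_zero, mul_sum]
  refine sum_congr rfl fun k hk => ?_
  rw [qv_pow_eq_mul_inv_pow (Nat.lt_succ_iff.1 (mem_range.1 hk))]
  ring

lemma prod_range_one_add_qv_pow_mul_inv (n a : ℕ) :
    ∏ i ∈ range (n + a), (1 + qv ^ i * (qv ^ n)⁻¹)
      = (qv ^ (n + 1).choose 2)⁻¹ * (∏ i ∈ Icc 1 n, (1 + qv ^ i))
          * ∏ i ∈ range a, (1 + qv ^ i) := by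
  have hlow : ∏ i ∈ range n, (1 + qv ^ i * (qv ^ n)⁻¹)
      = ∏ i ∈ range n, ((qv ^ (i + 1))⁻¹ * (1 + qv ^ (i + 1))) := by
    rw [← prod_range_reflect]
    refine prod_congr rfl fun i hi => ?_
    have hpow : qv ^ (n - 1 - i) * (qv ^ n)⁻¹ = (qv ^ (i + 1))⁻¹ := by
      have := qv_ne_zero
      field_simp
      rw [← pow_add]
      congr 1
      have := mem_range.1 hi
      omega
    rw [hpow, mul_add, mul_one, inv_mul_cancel₀ (pow_ne_zero _ qv_ne_zero), add_comm]
  have hhigh : ∏ i ∈ range a, (1 + qv ^ (n + i) * (qv ^ n)⁻¹) = ∏ i ∈ range a, (1 + qv ^ i) := by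
    simp only [pow_add, mul_comm (qv ^ n), mul_inv_cancel_right₀ (pow_ne_zero _ qv_ne_zero)]
  rw [prod_range_add, hlow, hhigh, prod_mul_distrib, prod_inv_distrib, prod_pow_eq_pow_sum,
    sum_range_add_one_eq_choose_two, prod_Icc_one_eq_prod_range]

lemma sum_qBin_even_mul_qv_pow_odd (n : ℕ) :
    ∑ k ∈ range (n + 1), qBin (2 * n + 1) (2 * k) * qv ^ (k * (k - 1) + (n - k) ^ 2)
      = qv ^ n.choose 2 * ∏ i ∈ Icc 1 n, (1 + qv ^ i) ^ 2 := by
  rw [sum_qBin_even_mul_qv_pow (by norm_num) (by omega), show 2 * n + 1 = n + (n + 1) by ring,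
    prod_range_one_add_qv_pow_mul_inv, prod_range_succ',
    ← prod_Icc_one_eq_prod_range (fun i => 1 + qv ^ i), prod_pow, sq_eq_choose_two_add_choose_two,
    pow_add]
  have := qv_ne_zero
  field_simp
  ring

lemma sum_qBin_even_mul_qv_pow_even {n : ℕ} (hn : n ≠ 0) :
    ∑ k ∈ range (n + 1), qBin (2 * n) (2 * k) * qv ^ (k * (k - 1) + (n - k) ^ 2)
      = qv ^ n.choose 2 * (∏ i ∈ Icc 1 (n - 1), (1 + qv ^ i) ^ 2) * (1 + qv ^ n) := by
  obtain ⟨m, rfl⟩ : ∃ m, n = m + 1 := ⟨n - 1, by omega⟩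
  have h := sum_qBin_even_mul_qv_pow (n := m + 1) (r := 0) (by norm_num) (by omega)
  rw [add_zero] at h
  rw [h, two_mul, prod_range_one_add_qv_pow_mul_inv, prod_range_succ',
    prod_Icc_succ_top (by omega), ← prod_Icc_one_eq_prod_range (fun i => 1 + qv ^ i),
    Nat.add_sub_cancel, prod_pow, sq_eq_choose_two_add_choose_two, pow_add]
  have := qv_ne_zero
  field_simp
  ring

def qEgfCoeff (A : PowerSeries Fq) (m : ℕ) : Fq := qFact qv m * coeff m A

lemma qEgfCoeff_mul (A B : PowerSeries Fq) (m : ℕ) :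
    qEgfCoeff (A * B) m
      = ∑ k ∈ range (m + 1), qBin m k * qEgfCoeff A k * qEgfCoeff B (m - k) := by
  rw [qEgfCoeff, coeff_mul, Nat.sum_antidiagonal_eq_sum_range_succ_mk, mul_sum]
  refine sum_congr rfl fun k _ => ?_
  have := qFact_qv_ne_zero k
  have := qFact_qv_ne_zero (m - k)
  simp only [qBin, qEgfCoeff]
  field_simp

lemma qEgfCoeff_mul_of_odd_eq_zero {A : PowerSeries Fq} (hA : ∀ j, Odd j → coeff j A = 0)
    (B : PowerSeries Fq) (m : ℕ) :
    qEgfCoeff (A * B) m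
      = ∑ k ∈ range (m / 2 + 1),
          qBin m (2 * k) * qEgfCoeff A (2 * k) * qEgfCoeff B (m - 2 * k) := by
  rw [qEgfCoeff_mul, sum_range_succ_eq_sum_range_even]
  intro j hj
  rw [qEgfCoeff, hA j hj]
  ring

lemma coeff_qcos_of_odd {m : ℕ} (hm : Odd m) : coeff m (qcos qv) = 0 := by
  simp [qcos, Nat.odd_iff.1 hm]

lemma qEgfCoeff_qcos (k : ℕ) : qEgfCoeff (qcos qv) (2 * k) = (-1) ^ k * qv ^ (k ^ 2) := by
  rw [qEgfCoeff, qcos, coeff_mk, if_pos (by omega), Nat.mul_div_cancel_left k two_pos,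
    mul_div_cancel₀ _ (qFact_qv_ne_zero _)]

lemma qEgfCoeff_qsin (k : ℕ) : qEgfCoeff (qsin qv) (2 * k + 1) = (-1) ^ k * qv ^ (k ^ 2) := by
  rw [qEgfCoeff, qsin, coeff_mk, if_pos (by omega), show (2 * k + 1) / 2 = k by omega,
    mul_div_cancel₀ _ (qFact_qv_ne_zero _)]

def qPhi : PowerSeries Fq :=
  PowerSeries.mk fun m =>
    if m % 2 = 0 then (-1 : Fq) ^ (m / 2) * qv ^ (m / 2 * (m / 2 - 1)) / qFact qv m else 0

lemma coeff_qPhi_of_odd {m : ℕ} (hm : Odd m) : coeff m qPhi = 0 := by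
  simp [qPhi, Nat.odd_iff.1 hm]

lemma qEgfCoeff_qPhi (k : ℕ) : qEgfCoeff qPhi (2 * k) = (-1) ^ k * qv ^ (k * (k - 1)) := by
  rw [qEgfCoeff, qPhi, coeff_mk, if_pos (by omega), Nat.mul_div_cancel_left k two_pos,
    mul_div_cancel₀ _ (qFact_qv_ne_zero _)]

lemma qEgfCoeff_qPhi_mul {B : PowerSeries Fq} {r : ℕ} (hr : r < 2)
    (hB : ∀ j, qEgfCoeff B (2 * j + r) = (-1) ^ j * qv ^ (j ^ 2)) (n : ℕ) :
    qEgfCoeff (qPhi * B) (2 * n + r)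
      = (-1) ^ n *
          ∑ k ∈ range (n + 1), qBin (2 * n + r) (2 * k) * qv ^ (k * (k - 1) + (n - k) ^ 2) := by
  rw [qEgfCoeff_mul_of_odd_eq_zero (fun _ => coeff_qPhi_of_odd),
    show (2 * n + r) / 2 = n by omega, mul_sum]
  refine sum_congr rfl fun k hk => ?_
  have hkn : k ≤ n := Nat.lt_succ_iff.1 (mem_range.1 hk)
  rw [qEgfCoeff_qPhi, show 2 * n + r - 2 * k = 2 * (n - k) + r by omega, hB,
    ← Nat.add_sub_cancel' hkn, pow_add (-1 : Fq) k, Nat.add_sub_cancel_left, pow_add]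
  ring

lemma qEgfCoeff_qPhi_mul_qcos {n : ℕ} (hn : n ≠ 0) :
    qEgfCoeff (qPhi * qcos qv) (2 * n)
      = (-1) ^ n * qv ^ n.choose 2 * (∏ i ∈ Icc 1 (n - 1), (1 + qv ^ i) ^ 2) * (1 + qv ^ n) := by
  rw [← add_zero (2 * n), qEgfCoeff_qPhi_mul (by norm_num) qEgfCoeff_qcos, add_zero,
    sum_qBin_even_mul_qv_pow_even hn]
  ring

lemma qEgfCoeff_qPhi_mul_qsin (n : ℕ) :
    qEgfCoeff (qPhi * qsin qv) (2 * n + 1)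
      = (-1) ^ n * qv ^ n.choose 2 * ∏ i ∈ Icc 1 n, (1 + qv ^ i) ^ 2 := by
  rw [qEgfCoeff_qPhi_mul (by norm_num) qEgfCoeff_qsin, sum_qBin_even_mul_qv_pow_odd]
  ring

lemma qtan_mul_qcos : qtan * qcos qv = qsin qv := by
  have hc : constantCoeff (qcos qv) ≠ 0 := by
    simp [← coeff_zero_eq_constantCoeff_apply, qcos, qFact_zero]
  rw [qtan, mul_assoc, PowerSeries.inv_mul_cancel _ hc, mul_one]

theorem q_tangent_recursion (n : ℕ) :
    T (2 * n + 1) +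
      ∑ k ∈ Finset.Icc 1 n,
        qBin (2 * n + 1) (2 * k) * (-1 : Fq) ^ k * qv ^ (k * (k - 1) / 2) *
          (∏ i ∈ Finset.Icc 1 (k - 1), (1 + qv ^ i) ^ 2) * (1 + qv ^ k) *
          T (2 * n + 1 - 2 * k) =
    (-1 : Fq) ^ n * qv ^ (n * (n - 1) / 2) * ∏ i ∈ Finset.Icc 1 n, (1 + qv ^ i) ^ 2 := by
  have hEven : ∀ j, Odd j → coeff j (qPhi * qcos qv) = 0 := fun _ =>
    coeff_mul_eq_zero_of_odd (fun _ => coeff_qPhi_of_odd) (fun _ => coeff_qcos_of_odd)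
  have hzero : qEgfCoeff (qPhi * qcos qv) 0 = 1 := by
    simpa [qBin_zero] using qEgfCoeff_qPhi_mul (by norm_num) qEgfCoeff_qcos 0
  have key : qEgfCoeff (qPhi * qcos qv * qtan) (2 * n + 1)
      = qEgfCoeff (qPhi * qsin qv) (2 * n + 1) := by
    rw [mul_assoc, mul_comm (qcos qv), qtan_mul_qcos]
  rw [qEgfCoeff_mul_of_odd_eq_zero hEven, show (2 * n + 1) / 2 = n by omega,
    sum_range_eq_add_Ico _ (Nat.zero_lt_succ n), qEgfCoeff_qPhi_mul_qsin] at key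
  rw [← Nat.choose_two_right, ← key, Nat.mul_zero, hzero, qBin_zero, Nat.succ_eq_add_one,
    Ico_add_one_right_eq_Icc, Nat.sub_zero, one_mul, one_mul]
  congr 1
  refine sum_congr rfl fun k hk => ?_
  rw [qEgfCoeff_qPhi_mul_qcos (by have := (mem_Icc.1 hk).1; omega), Nat.choose_two_right]
  simp only [T, qEgfCoeff]
  ring
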